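/- (Pointwise tilting identity underlying Proposition 3.) Let ν > 0, μ ∈ ℝ^p, Σ positive definite, and let r ∈ ℝ satisfy ν + 2r > 0. Then for every x ∈ ℝ^p, ((ν+p)/(ν+δ(x)))^r · t_p(x|μ,Σ,ν) = c_p(ν,r) · t_p(x|μ, Σ*, ν+2r), where Σ* = νΣ/(ν+2r) and c_p(ν,r) = ((ν+p)/ν)^r · Γ((p+ν)/2)Γ((ν+2r)/2) / (Γ(ν/2)Γ((p+ν+2r)/2)). -/

import Mathlib

open MeasureTheory Matrix Real Filter

/-- Squared Mahalanobis distance δ(x) = (x−μ)ᵀ S⁻¹ (x−μ). -/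
noncomputable def mahalanobis {n : Type*} [Fintype n] [DecidableEq n]
    (μ : n → ℝ) (S : Matrix n n ℝ) (x : n → ℝ) : ℝ :=
  (x - μ) ⬝ᵥ (S⁻¹ *ᵥ (x - μ))

/-- The multivariate Student's-t density t_p(x|μ,S,ν). -/
noncomputable def tPdf {n : Type*} [Fintype n] [DecidableEq n]
    (μ : n → ℝ) (S : Matrix n n ℝ) (ν : ℝ) (x : n → ℝ) : ℝ :=
  Real.Gamma (((Fintype.card n : ℝ) + ν) / 2) /
      (Real.Gamma (ν / 2) * Real.pi ^ ((Fintype.card n : ℝ) / 2) *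
        ν ^ ((Fintype.card n : ℝ) / 2)) *
    S.det ^ (-(1 : ℝ) / 2) *
    (1 + mahalanobis μ S x / ν) ^ (-(((Fintype.card n : ℝ) + ν) / 2))

/-- The multivariate normal density φ_p(x|μ,S). -/
noncomputable def normalPdf {n : Type*} [Fintype n] [DecidableEq n]
    (μ : n → ℝ) (S : Matrix n n ℝ) (x : n → ℝ) : ℝ :=
  (2 * Real.pi) ^ (-(Fintype.card n : ℝ) / 2) * S.det ^ (-(1 : ℝ) / 2) *
    Real.exp (-(mahalanobis μ S x) / 2)

/-- The Gamma(a,b) density h(u|a,b) (for u > 0). -/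
noncomputable def gammaPdf (a b u : ℝ) : ℝ :=
  b ^ a / Real.Gamma a * u ^ (a - 1) * Real.exp (-(b * u))

/-- Standard normal pdf. -/
noncomputable def stdNormalPdf (x : ℝ) : ℝ :=
  (Real.sqrt (2 * Real.pi))⁻¹ * Real.exp (-(x ^ 2) / 2)

/-- Standard normal cdf. -/
noncomputable def stdNormalCdf (x : ℝ) : ℝ :=
  ∫ t in Set.Iic x, stdNormalPdf t

/-- Univariate Student's-t density with location c, scale s², κ degrees of freedom. -/
noncomputable def tPdf1 (c s2 κ y : ℝ) : ℝ :=
  Real.Gamma ((1 + κ) / 2) /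
      (Real.Gamma (κ / 2) * Real.sqrt (Real.pi * κ) * Real.sqrt s2) *
    (1 + (y - c) ^ 2 / (κ * s2)) ^ (-((1 + κ) / 2))

/-! Scaling the matrix by `ν / (ν + 2r)` scales the Mahalanobis distance by `(ν + 2r) / ν`,
so the kernel of `t_p(·|μ, Σ*, ν + 2r)` is `(1 + δ/ν)^(-(p+ν)/2 - r)`: the shift of the degrees
of freedom contributes exactly the tilt `(1 + δ/ν)^(-r)`, while the factors `det(Σ*)^(-1/2)` and
`(ν + 2r)^(-p/2)` combine to the `det(Σ)^(-1/2) ν^(-p/2)` of the original density. -/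

section

variable {n : Type*} [Fintype n] [DecidableEq n]

lemma mahalanobis_nonneg {S : Matrix n n ℝ} (hS : S.PosDef) (μ x : n → ℝ) :
    0 ≤ mahalanobis μ S x :=
  hS.inv.posSemidef.dotProduct_mulVec_nonneg (x - μ)

lemma mahalanobis_smul (μ : n → ℝ) {S : Matrix n n ℝ} (hS : IsUnit S.det) {c : ℝ}
    (hc : c ≠ 0) (x : n → ℝ) :
    mahalanobis μ (c • S) x = c⁻¹ * mahalanobis μ S x := by
  have : Invertible c := invertibleOfNonzero hc
  rw [mahalanobis, S.inv_smul c hS, invOf_eq_inv]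
  simp [smul_mulVec, dotProduct_smul, mahalanobis]

lemma tPdf_smul (μ : n → ℝ) {S : Matrix n n ℝ} (hS : 0 < S.det) {c κ : ℝ} (hc : 0 < c)
    (hκ : 0 ≤ κ) (x : n → ℝ) :
    tPdf μ (c • S) κ x =
      Real.Gamma (((Fintype.card n : ℝ) + κ) / 2) /
          (Real.Gamma (κ / 2) * π ^ ((Fintype.card n : ℝ) / 2) *
            (c * κ) ^ ((Fintype.card n : ℝ) / 2)) *
        S.det ^ (-(1 : ℝ) / 2) *
        (1 + mahalanobis μ S x / (c * κ)) ^ (-(((Fintype.card n : ℝ) + κ) / 2)) := by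
  have hdet : (c • S).det ^ (-(1 : ℝ) / 2) =
      (c ^ ((Fintype.card n : ℝ) / 2))⁻¹ * S.det ^ (-(1 : ℝ) / 2) := by
    rw [det_smul, mul_rpow (by positivity) hS.le, ← rpow_natCast, ← rpow_mul hc.le,
      ← rpow_neg hc.le]
    ring_nf
  rw [tPdf, hdet, mahalanobis_smul μ (isUnit_iff_ne_zero.mpr hS.ne') hc.ne', mul_rpow hc.le hκ]
  field_simp

end

lemma div_add_rpow {a ν d : ℝ} (ha : 0 ≤ a) (hν : 0 < ν) (hd : 0 ≤ d) (r : ℝ) :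
    (a / (ν + d)) ^ r = (a / ν) ^ r * (1 + d / ν) ^ (-r) := by
  have : a / (ν + d) = a / ν * (1 + d / ν)⁻¹ := by field_simp
  rw [this, mul_rpow (by positivity) (by positivity), inv_rpow (by positivity),
    rpow_neg (by positivity)]

/-- pointwise tilting identity underlying Proposition 3. -/
theorem tPdf_tilting {p : ℕ} (ν r : ℝ) (hν : 0 < ν) (hr : 0 < ν + 2 * r)
    (μ : Fin p → ℝ) (S : Matrix (Fin p) (Fin p) ℝ) (hS : S.PosDef)
    (x : Fin p → ℝ) :
    ((ν + (p : ℝ)) / (ν + mahalanobis μ S x)) ^ r * tPdf μ S ν x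
      = ((ν + (p : ℝ)) / ν) ^ r *
          (Real.Gamma (((p : ℝ) + ν) / 2) * Real.Gamma ((ν + 2 * r) / 2) /
            (Real.Gamma (ν / 2) * Real.Gamma (((p : ℝ) + ν + 2 * r) / 2))) *
        tPdf μ ((ν / (ν + 2 * r)) • S) (ν + 2 * r) x := by
  have hδ := mahalanobis_nonneg hS μ x
  have hrescale : ν / (ν + 2 * r) * (ν + 2 * r) = ν := by field_simp
  rw [tPdf_smul μ hS.det_pos (by positivity) hr.le, hrescale, tPdf, Fintype.card_fin,
    ← add_assoc]
  set δ := mahalanobis μ S x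
  have hsplit : (1 + δ / ν) ^ (-(((p : ℝ) + ν + 2 * r) / 2)) =
      (1 + δ / ν) ^ (-(((p : ℝ) + ν) / 2)) * (1 + δ / ν) ^ (-r) := by
    rw [← rpow_add (by positivity)]; ring_nf
  rw [hsplit, div_add_rpow (by positivity) hν hδ]
  have h1 : Real.Gamma ((ν + 2 * r) / 2) ≠ 0 := (Gamma_pos_of_pos (by positivity)).ne'
  have h2 : Real.Gamma (((p : ℝ) + ν + 2 * r) / 2) ≠ 0 :=
    (Gamma_pos_of_pos (by linarith [p.cast_nonneg (α := ℝ)])).ne'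
  -- opaque Gamma values keep `field_simp` from rewriting their arguments away from `h1`, `h2`
  generalize Real.Gamma ((ν + 2 * r) / 2) = G₁ at h1 ⊢
  generalize Real.Gamma (((p : ℝ) + ν + 2 * r) / 2) = G₂ at h2 ⊢
  field_simp
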